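/- Let H be a group and let G be a subgroup of finite index in the restricted direct product Π₀ i : ℤ, H. Then there exists an index i ∈ ℤ such that the coordinate projection onto the i-th factor maps G onto H; that is, for every h ∈ H there exists g ∈ G with g i = h. -/

import Mathlib

/-- The restricted direct product `Π₀ i : ℤ, H`: the subgroup of `ℤ → H`
consisting of the finitely supported functions (pointwise multiplication). -/
def IntRestrictedProduct (H : Type*) [Group H] : Subgroup (ℤ → H) where
  carrier := {f | (Function.mulSupport f).Finite}
  one_mem' := by simp [Function.mulSupport_one]
  mul_mem' := by
    intro f g hf hg
    exact ((hf.union hg).subset (Function.mulSupport_mul f g))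
  inv_mem' := by
    intro f hf
    simpa [Function.mulSupport_inv] using hf

/-!
If the `i`-th coordinate of `G` misses some `aᵢ`, then the cosets of the elements
`Pi.mulSingle i aᵢ` are pairwise distinct: two of them lying in one coset would put into `G`
an element whose `i`-th coordinate is `aᵢ`. Hence the coordinates on which `G` does not surject
are at most as many as the cosets of `G`, and since `ℤ` is infinite, some coordinate is left.
-/

section CoordinateSurjectivity

variable {ι : Type*} {H : ι → Type*} [∀ i, Group (H i)] {P : Subgroup (∀ i, H i)}
  (G : Subgroup P)

theorem exists_mem_apply_eq_of_mk_eq {i : ι} {x y : P} (hxy : (x : P ⧸ G) = y)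
    (hy : (y : ∀ i, H i) i = 1) : ∃ g ∈ G, (g : ∀ i, H i) i = (x : ∀ i, H i) i :=
  ⟨(x⁻¹ * y)⁻¹, inv_mem (QuotientGroup.eq.mp hxy), by simp [hy]⟩

theorem finite_setOf_not_forall_exists_mem_apply_eq [DecidableEq ι]
    (hP : ∀ i (a : H i), Pi.mulSingle i a ∈ P) (hG : G.index ≠ 0) :
    {i | ¬ ∀ a : H i, ∃ g ∈ G, (g : ∀ i, H i) i = a}.Finite := by
  set S := {i | ¬ ∀ a : H i, ∃ g ∈ G, (g : ∀ i, H i) i = a}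
  choose a ha using fun i : S => not_forall.mp i.2
  let single (i : S) : P := ⟨Pi.mulSingle i (a i), hP i (a i)⟩
  have hinj : Function.Injective fun i : S => (single i : P ⧸ G) := by
    intro i j hij
    by_contra hne
    have hne' : (i : ι) ≠ j := fun h => hne (Subtype.ext h)
    obtain ⟨g, hg, hgi⟩ := exists_mem_apply_eq_of_mk_eq G (i := i) hij (by simp [single, hne'])
    exact ha i ⟨g, hg, by simpa [single] using hgi⟩
  have : Finite (P ⧸ G) := Nat.finite_of_card_ne_zero hG
  have : Finite S := Finite.of_injective _ hinj
  exact S.toFinite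

end CoordinateSurjectivity

theorem mulSingle_mem_intRestrictedProduct {H : Type*} [Group H] (i : ℤ) (a : H) :
    Pi.mulSingle i a ∈ IntRestrictedProduct H :=
  (Set.finite_singleton i).subset Pi.mulSupport_mulSingle_subset

/-- A finite-index subgroup of the restricted direct product `Π₀ i : ℤ, H`
surjects onto some coordinate factor: there is an `i : ℤ` such that every `h ∈ H`
is the `i`-th coordinate of some element of the subgroup. -/
theorem finiteIndex_subgroup_surjects_on_some_factor (H : Type*) [Group H]
    (G : Subgroup (IntRestrictedProduct H)) (hG : G.index ≠ 0) :
    ∃ i : ℤ, ∀ h : H, ∃ g ∈ G, ((g : ℤ → H)) i = h := by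
  have hbad := finite_setOf_not_forall_exists_mem_apply_eq G
    mulSingle_mem_intRestrictedProduct hG
  obtain ⟨i, hi⟩ := hbad.infinite_compl.nonempty
  exact ⟨i, by simpa using hi⟩
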